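/- Let μ, μ_n be non-atomic Borel probability measures on [0,2) with μ_n → μ in the sense that μ_n[0,y) → μ[0,y) for all y. Then φ(μ_n) → φ(μ) uniformly on ℝ, where φ(μ)(y) = μ[1,2) + Σ_{m∈ℤ} μ(m-y, m]. -/

import Mathlib

/-!
For a non-atomic probability measure `μ` on `[0,2)` with distribution function `F_μ`, every term
`μ(m-y, m]` equals `F_μ m - F_μ (m-y)`, and `μ[1,2)` cancels the `m = 1` term of a difference, so
`φ(μ)(y) - φ(ν)(y) = -∑ₘ (F_μ - F_ν)(m-y)`. As `F_μ - F_ν` vanishes off `(0,2)`, at most two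
terms survive and `‖φ(μ) - φ(ν)‖_∞ ≤ 2 ‖F_μ - F_ν‖_∞`. The distribution functions converge
uniformly by Pólya's argument: monotone functions converging pointwise to a continuous limit
converge locally uniformly, hence uniformly on `[0,2]`, and outside `[0,2]` they all agree.
-/

open MeasureTheory

/-- Signed interval measure `μ(a,b]`, with the convention `μ(a,b] = -μ[b,a)` when `b < a`. -/
noncomputable def sIoc (μ : Measure ℝ) (a b : ℝ) : ℝ :=
  if a ≤ b then (μ (Set.Ioc a b)).toReal else -((μ (Set.Ico b a)).toReal)

/-- The lift of the circle map associated to a measure `μ` on `[0,2)`: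
`φ(μ)(y) = μ[1,2) + ∑_{m ∈ ℤ} μ(m-y, m]`. -/
noncomputable def phiMap (μ : Measure ℝ) : ℝ → ℝ :=
  fun y => (μ (Set.Ico (1:ℝ) 2)).toReal + ∑' m : ℤ, sIoc μ ((m : ℝ) - y) (m : ℝ)

open Set Filter Topology ProbabilityTheory

theorem tendstoLocallyUniformly_of_monotone_of_tendsto {ι α : Type*} [TopologicalSpace α]
    [LinearOrder α] [OrderTopology α] {l : Filter ι} {F : ι → α → ℝ} {f : α → ℝ}
    (hF : ∀ i, Monotone (F i)) (hf : Continuous f)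
    (h : ∀ x, Tendsto (fun i => F i x) l (𝓝 (f x))) :
    TendstoLocallyUniformly F f l := by
  refine Metric.tendstoLocallyUniformly_iff.2 fun ε hε x => ?_
  have hε3 : 0 < ε / 3 := by positivity
  obtain ⟨u, v, -, huv, hfuv⟩ := exists_Icc_mem_subset_of_mem_nhds
    ((hf.tendsto x).eventually (Metric.ball_mem_nhds (f x) hε3))
  refine ⟨Icc u v, huv, ?_⟩
  filter_upwards [(h u).eventually (Metric.ball_mem_nhds _ hε3),
    (h v).eventually (Metric.ball_mem_nhds _ hε3)] with i hu hv y hy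
  have hfu : dist (f u) (f x) < ε / 3 := hfuv (left_mem_Icc.2 (hy.1.trans hy.2))
  have hfv : dist (f v) (f x) < ε / 3 := hfuv (right_mem_Icc.2 (hy.1.trans hy.2))
  have hfy : dist (f y) (f x) < ε / 3 := hfuv hy
  simp only [Real.dist_eq, abs_lt] at hu hv hfu hfv hfy ⊢
  have hFuy := hF i hy.1
  have hFyv := hF i hy.2
  constructor <;> linarith

theorem summable_int_of_eq_zero_of_notMem_Icc {E : Type*} [AddCommMonoid E] [TopologicalSpace E]
    {g : ℤ → E} {a b : ℝ} (hg : ∀ m : ℤ, (m : ℝ) ∉ Icc a b → g m = 0) : Summable g := by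
  refine summable_of_ne_finset_zero (s := Finset.Icc ⌊a⌋ ⌈b⌉) fun m hm => hg m fun hab => hm ?_
  exact Finset.mem_Icc.2
    ⟨Int.floor_le_iff.2 (by linarith [hab.1]), Int.le_ceil_iff.2 (by linarith [hab.2])⟩

theorem summable_comp_int_sub {G : ℝ → ℝ} {a b : ℝ} (hG : ∀ x ∉ Ioo a b, G x = 0) (y : ℝ) :
    Summable fun m : ℤ => G (m - y) :=
  summable_int_of_eq_zero_of_notMem_Icc (a := a + y) (b := b + y) fun m hm =>
    hG _ fun h => hm ⟨by linarith [h.1], by linarith [h.2]⟩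

theorem abs_tsum_comp_int_sub_le {G : ℝ → ℝ} {C : ℝ} (hG : ∀ x ∉ Ioo 0 2, G x = 0)
    (hC : ∀ x, |G x| ≤ C) (y : ℝ) : |∑' m : ℤ, G (m - y)| ≤ 2 * C := by
  have hsupp : ∀ m ∉ ({⌊y⌋ + 1, ⌊y⌋ + 2} : Finset ℤ), G (m - y) = 0 := by
    intro m hm
    refine hG _ fun h => hm ?_
    have h1 : ⌊y⌋ < m := Int.floor_lt.2 (by linarith [h.1])
    have h2 : m < ⌊y⌋ + 3 := by
      have := Int.lt_floor_add_one y
      exact_mod_cast (show (m : ℝ) < ⌊y⌋ + 3 by linarith [h.2])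
    simp only [Finset.mem_insert, Finset.mem_singleton]
    omega
  rw [tsum_eq_sum hsupp, Finset.sum_pair (by omega)]
  calc _ ≤ |G ((⌊y⌋ + 1 : ℤ) - y)| + |G ((⌊y⌋ + 2 : ℤ) - y)| := abs_add_le _ _
    _ ≤ 2 * C := by linarith [hC ((⌊y⌋ + 1 : ℤ) - y), hC ((⌊y⌋ + 2 : ℤ) - y)]

section cdf

variable {ν : Measure ℝ} [IsProbabilityMeasure ν] {a b : ℝ}

theorem cdf_eq_zero_of_le [NullSingletonClass ν] (hν : ν (Ico a b)ᶜ = 0) {x : ℝ} (hx : x ≤ a) :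
    cdf ν x = 0 := by
  have : ν (Iio x) = 0 :=
    measure_mono_null (show Iio x ⊆ (Ico a b)ᶜ from fun _ ht h => (not_le.2 ht) (hx.trans h.1)) hν
  rw [cdf_eq_real, measureReal_def, measure_congr Iio_ae_eq_Iic.symm, this, ENNReal.toReal_zero]

theorem cdf_eq_one_of_le (hν : ν (Ico a b)ᶜ = 0) {x : ℝ} (hx : b ≤ x) : cdf ν x = 1 := by
  have : ν (Iic x)ᶜ = 0 :=
    measure_mono_null (compl_subset_compl.2 fun t ht => (ht.2.trans_le hx).le) hν
  rw [cdf_eq_real, measureReal_def, (prob_compl_eq_zero_iff measurableSet_Iic).1 this,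
    ENNReal.toReal_one]

theorem cdf_eq_of_notMem_Ioo {μ : Measure ℝ} [IsProbabilityMeasure μ] [NullSingletonClass μ]
    [NullSingletonClass ν]
    (hμ : μ (Ico a b)ᶜ = 0) (hν : ν (Ico a b)ᶜ = 0) {x : ℝ} (hx : x ∉ Ioo a b) :
    cdf μ x = cdf ν x := by
  rcases le_or_gt x a with hxa | hax
  · rw [cdf_eq_zero_of_le hμ hxa, cdf_eq_zero_of_le hν hxa]
  · have hbx : b ≤ x := not_lt.1 fun hxb => hx ⟨hax, hxb⟩
    rw [cdf_eq_one_of_le hμ hbx, cdf_eq_one_of_le hν hbx]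

theorem measureReal_Ico_eq_cdf [NullSingletonClass ν] (hν : ν (Ico a b)ᶜ = 0) (y : ℝ) :
    ν.real (Ico a y) = cdf ν y := by
  have hIci : ν (Ici a)ᶜ = 0 := measure_mono_null (compl_subset_compl.2 fun _ ht => ht.1) hν
  rw [cdf_eq_real, measureReal_def, measureReal_def, ← Ici_inter_Iio, inter_comm,
    measure_inter_conull hIci, measure_congr Iio_ae_eq_Iic]

theorem continuous_cdf [NullSingletonClass ν] : Continuous (cdf ν) := by
  refine continuous_iff_continuousAt.2 fun x => ?_
  rw [(monotone_cdf ν).continuousAt_iff_leftLim_eq_rightLim, StieltjesFunction.rightLim_eq]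
  have hjump := (cdf ν).measure_singleton x
  rw [measure_cdf, measure_singleton, eq_comm, ENNReal.ofReal_eq_zero] at hjump
  exact le_antisymm ((monotone_cdf ν).leftLim_le le_rfl) (sub_nonpos.1 hjump)

theorem sIoc_eq_cdf_sub [NullSingletonClass ν] (x y : ℝ) : sIoc ν x y = cdf ν y - cdf ν x := by
  have hIoc : ∀ {s t : ℝ}, s ≤ t → (ν (Ioc s t)).toReal = cdf ν t - cdf ν s := fun {s t} hst => by
    have h := (cdf ν).measure_Ioc s t
    rw [measure_cdf] at h
    rw [h, ENNReal.toReal_ofReal (sub_nonneg.2 (monotone_cdf ν hst))]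
  unfold sIoc
  split_ifs with hxy
  · exact hIoc hxy
  · rw [measure_congr Ico_ae_eq_Ioc, hIoc (not_le.1 hxy).le, neg_sub]

theorem summable_cdf_sub_cdf_comp_sub [NullSingletonClass ν] (hν : ν (Ico a b)ᶜ = 0) (y : ℝ) :
    Summable fun m : ℤ => cdf ν m - cdf ν (m - y) := by
  refine summable_int_of_eq_zero_of_notMem_Icc (a := min a (a + y)) (b := max b (b + y))
    fun m hm => ?_
  rcases not_and_or.1 hm with hlo | hhi
  · have hm : (m : ℝ) ≤ min a (a + y) := (not_le.1 hlo).le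
    rw [cdf_eq_zero_of_le hν (hm.trans (min_le_left _ _)),
      cdf_eq_zero_of_le hν (by linarith [min_le_right a (a + y)]), sub_self]
  · have hm : max b (b + y) ≤ m := (not_le.1 hhi).le
    rw [cdf_eq_one_of_le hν ((le_max_left _ _).trans hm),
      cdf_eq_one_of_le hν (by linarith [le_max_right b (b + y)]), sub_self]

end cdf

theorem tendstoUniformly_cdf_of_tendsto {ι : Type*} {l : Filter ι} {μ : Measure ℝ}
    {μs : ι → Measure ℝ} [IsProbabilityMeasure μ] [∀ i, IsProbabilityMeasure (μs i)]
    [NullSingletonClass μ] [∀ i, NullSingletonClass (μs i)] {a b : ℝ}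
    (hμ : μ (Ico a b)ᶜ = 0) (hμs : ∀ i, μs i (Ico a b)ᶜ = 0)
    (h : ∀ x, Tendsto (fun i => cdf (μs i) x) l (𝓝 (cdf μ x))) :
    TendstoUniformly (fun i => cdf (μs i)) (cdf μ) l := by
  have hIcc : TendstoUniformlyOn (fun i => cdf (μs i)) (cdf μ) l (Icc a b) :=
    (tendstoLocallyUniformlyOn_iff_tendstoUniformlyOn_of_compact isCompact_Icc).1
      (tendstoLocallyUniformly_of_monotone_of_tendsto (fun i => monotone_cdf (μs i))
        continuous_cdf h).tendstoLocallyUniformlyOn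
  refine Metric.tendstoUniformly_iff.2 fun ε hε => ?_
  filter_upwards [Metric.tendstoUniformlyOn_iff.1 hIcc ε hε] with i hi x
  by_cases hx : x ∈ Icc a b
  · exact hi x hx
  · rw [cdf_eq_of_notMem_Ioo hμ (hμs i) fun h => hx (Ioo_subset_Icc_self h), dist_self]
    exact hε

theorem phiMap_sub_phiMap {μ ν : Measure ℝ} [IsProbabilityMeasure μ] [IsProbabilityMeasure ν]
    [NullSingletonClass μ] [NullSingletonClass ν]
    (hμ : μ (Ico 0 2)ᶜ = 0) (hν : ν (Ico 0 2)ᶜ = 0) (y : ℝ) :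
    phiMap μ y - phiMap ν y = -∑' m : ℤ, (cdf μ (m - y) - cdf ν (m - y)) := by
  set G : ℝ → ℝ := fun x => cdf μ x - cdf ν x
  have hG : ∀ x ∉ Ioo 0 2, G x = 0 := fun x hx => sub_eq_zero.2 (cdf_eq_of_notMem_Ioo hμ hν hx)
  have hIco : ∀ {ρ : Measure ℝ}, (ρ (Ico 1 2)).toReal = -sIoc ρ 2 1 := by
    intro ρ
    simp [sIoc]
  have hsum : ∑' m : ℤ, G m = G 1 := by
    rw [tsum_eq_single 1 fun m hm => hG _ fun h => hm ?_, Int.cast_one]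
    have h0 : (0 : ℤ) < m := by exact_mod_cast h.1
    have h2 : m < 2 := by exact_mod_cast h.2
    omega
  simp only [phiMap, hIco, sIoc_eq_cdf_sub]
  rw [add_sub_add_comm, ← (summable_cdf_sub_cdf_comp_sub hμ y).tsum_sub
      (summable_cdf_sub_cdf_comp_sub hν y)]
  have hterm : ∀ m : ℤ, cdf μ m - cdf μ (m - y) - (cdf ν m - cdf ν (m - y)) = G m - G (m - y) :=
    fun m => by ring
  simp only [hterm]
  have hsummable : Summable fun m : ℤ => G m := by simpa using summable_comp_int_sub hG 0
  rw [hsummable.tsum_sub (summable_comp_int_sub hG y), hsum,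
    cdf_eq_one_of_le hμ le_rfl, cdf_eq_one_of_le hν le_rfl]
  ring

theorem phiMap_continuous_in_measure (μ : Measure ℝ) (μs : ℕ → Measure ℝ)
    [IsProbabilityMeasure μ] [∀ k, IsProbabilityMeasure (μs k)]
    (hsupp : μ (Set.Ico (0:ℝ) 2)ᶜ = 0) (hsupps : ∀ k, μs k (Set.Ico (0:ℝ) 2)ᶜ = 0)
    (hatom : ∀ y : ℝ, μ {y} = 0) (hatoms : ∀ k, ∀ y : ℝ, μs k {y} = 0)
    (hconv : ∀ y : ℝ,
      Filter.Tendsto (fun k => (μs k (Set.Ico (0:ℝ) y)).toReal) Filter.atTop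
        (nhds ((μ (Set.Ico (0:ℝ) y)).toReal))) :
    TendstoUniformly (fun k => phiMap (μs k)) (phiMap μ) Filter.atTop := by
  have : NullSingletonClass μ := ⟨hatom⟩
  have : ∀ k, NullSingletonClass (μs k) := fun k => ⟨hatoms k⟩
  have hcdf : TendstoUniformly (fun k => cdf (μs k)) (cdf μ) atTop := by
    refine tendstoUniformly_cdf_of_tendsto hsupp hsupps fun y => ?_
    simpa only [← measureReal_def, measureReal_Ico_eq_cdf hsupp,
      measureReal_Ico_eq_cdf (hsupps _)] using hconv y
  refine Metric.tendstoUniformly_iff.2 fun ε hε => ?_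
  filter_upwards [Metric.tendstoUniformly_iff.1 hcdf (ε / 3) (by positivity)] with k hk y
  have hG : ∀ x ∉ Ioo 0 2, cdf μ x - cdf (μs k) x = 0 := fun x hx =>
    sub_eq_zero.2 (cdf_eq_of_notMem_Ioo hsupp (hsupps k) hx)
  have hbound := abs_tsum_comp_int_sub_le hG (fun x => (hk x).le) y
  rw [Real.dist_eq, phiMap_sub_phiMap hsupp (hsupps k), abs_neg]
  linarith
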